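/- arXiv:1105.1765 — 2 statements merged into one kernel-verified Lean document; each statement's English description precedes it below -/
import Mathlib

section
/- Let T = ℝᵈ or ℤᵈ, and let {f_t}_{t∈T} ⊂ L^α(S, B_S, μ) be a spectral family generated by a nonsingular flow {φ_t}_{t∈T} with cocycle {c_t}_{t∈T}, i.e., f_t = c_t · w_t^{1/α} · (f₀ ∘ φ_t) μ-a.e. for every t. If r_1, …, r_n : S → [0, 1] are measurable φ-invariant functions (r_k ∘ φ_τ = r_k μ-a.e. for all τ ∈ T) with ∑_{k=1}^n r_k(s)^α = 1 for μ-a.e. s, then each family {r_k f_t}_{t∈T} is stationary and together they form a stationary SαS decomposition of {f_t}_{t∈T}. -/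
open MeasureTheory

noncomputable section

/-- Two spectral families `{f_t}_{t ∈ T} ⊂ L^α(S, μ)` and `{g_t}_{t ∈ T} ⊂ L^α(V, ν)` are
SαS-equivalent: all α-th absolute power integrals of finite linear combinations agree. -/
def SasEquiv {T S V : Type*} [MeasurableSpace S] [MeasurableSpace V]
    (α : ℝ) (μ : Measure S) (ν : Measure V) (f : T → S → ℝ) (g : T → V → ℝ) : Prop :=
  ∀ (m : ℕ) (a : Fin m → ℝ) (t : Fin m → T),
    ∫ s, |∑ j, a j * f (t j) s| ^ α ∂μ = ∫ v, |∑ j, a j * g (t j) v| ^ α ∂ν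

/-- The families `{g^{(k)}_t}_{t ∈ T} ⊂ L^α(V_k, ν_k)`, `k = 1, …, n`, form an SαS
decomposition of `{f_t}_{t ∈ T} ⊂ L^α(S, μ)`. -/
def SasDecomp {T S : Type*} [MeasurableSpace S] (α : ℝ) (μ : Measure S) (f : T → S → ℝ)
    {n : ℕ} {V : Fin n → Type*} [∀ k, MeasurableSpace (V k)]
    (ν : ∀ k, Measure (V k)) (g : ∀ k, T → V k → ℝ) : Prop :=
  ∀ (m : ℕ) (a : Fin m → ℝ) (t : Fin m → T),
    ∫ s, |∑ j, a j * f (t j) s| ^ α ∂μ = ∑ k, ∫ v, |∑ j, a j * g k (t j) v| ^ α ∂(ν k)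

/-- The family `{f_t}_{t ∈ T}` has full support in `S`: there is no measurable set of
positive measure on which every `f_t` vanishes `μ`-a.e. -/
def FullSupport {T S : Type*} [MeasurableSpace S] (μ : Measure S) (f : T → S → ℝ) : Prop :=
  ∀ A : Set S, MeasurableSet A → (∀ t, ∀ᵐ s ∂μ, s ∈ A → f t s = 0) → μ A = 0

/-- The ratio σ-algebra `ρ(F)` generated by the ratios `f_{t₁}/f_{t₂}` (convention `x/0 = 0`). -/
def ratioSigma {T S : Type*} (f : T → S → ℝ) : MeasurableSpace S :=
  ⨆ (t₁ : T) (t₂ : T), MeasurableSpace.comap (fun s => f t₁ s / f t₂ s) inferInstance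


/-- The family is stationary: each shifted family `{f_{t+τ}}` is SαS-equivalent to `{f_t}`. -/
def StationaryFam {T S : Type*} [Add T] [MeasurableSpace S]
    (α : ℝ) (μ : Measure S) (f : T → S → ℝ) : Prop :=
  ∀ τ : T, SasEquiv α μ μ (fun t => f (t + τ)) f

/-- `φ` is a nonsingular flow on `(S, μ)`: a family of bimeasurable bijections with
`φ_0 = id`, `φ_{t+τ} = φ_t ∘ φ_τ` and `μ(φ_t(A)) = 0 ↔ μ(A) = 0`. -/
def IsNonsingularFlow {T S : Type*} [AddCommGroup T] [MeasurableSpace S]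
    (μ : Measure S) (φ : T → S → S) : Prop :=
  (∀ t, Measurable (φ t)) ∧ φ 0 = id ∧ (∀ t τ, φ (t + τ) = φ t ∘ φ τ) ∧
    ∀ (t : T) (A : Set S), MeasurableSet A → (μ (φ t '' A) = 0 ↔ μ A = 0)

/-- `c` is a `±1`-valued cocycle for the flow `φ`. -/
def IsCocycle {T S : Type*} [AddCommGroup T] [MeasurableSpace S]
    (μ : Measure S) (φ : T → S → S) (c : T → S → ℝ) : Prop :=
  (∀ t, Measurable (c t)) ∧ (∀ t s, c t s = 1 ∨ c t s = -1) ∧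
    ∀ t τ : T, ∀ᵐ s ∂μ, c (t + τ) s = c t s * c τ (φ t s)

/-- `w τ = d(μ∘φ_τ)/dμ`: measurable, a.e. positive, and satisfying the change of
variables formula `∫ g(φ_τ(s)) w_τ(s) μ(ds) = ∫ g dμ` for integrable `g`. -/
def IsFlowRN {T S : Type*} [AddCommGroup T] [MeasurableSpace S]
    (μ : Measure S) (φ : T → S → S) (w : T → S → ℝ) : Prop :=
  (∀ τ, Measurable (w τ)) ∧ (∀ τ, ∀ᵐ s ∂μ, 0 < w τ s) ∧
    ∀ (τ : T) (g : S → ℝ), Integrable g μ →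
      ∫ s, g (φ τ s) * w τ s ∂μ = ∫ s, g s ∂μ

/-- The spectral family `{f_t}` is generated by the flow `φ` with cocycle `c`:
`f_t = c_t ⬝ w_t^{1/α} ⬝ (f₀ ∘ φ_t)` μ-a.e. -/
def FlowGenerated {T S : Type*} [AddCommGroup T] [MeasurableSpace S]
    (α : ℝ) (μ : Measure S) (φ : T → S → S) (c : T → S → ℝ) (w : T → S → ℝ)
    (f : T → S → ℝ) : Prop :=
  ∀ t : T, ∀ᵐ s ∂μ, f t s = c t s * w t s ^ (1 / α) * f 0 (φ t s)

/-- `T` is (an additive group isomorphic to) `ℝᵈ` or `ℤᵈ` for some `d`. -/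
def IsRdOrZd (T : Type*) [AddCommGroup T] : Prop :=
  (∃ d : ℕ, Nonempty (T ≃+ (Fin d → ℝ))) ∨ (∃ d : ℕ, Nonempty (T ≃+ (Fin d → ℤ)))

/-!
The change of variables formula `∫ g(φ_τ s) w_τ(s) dμ = ∫ g dμ`, tested on sets where `w_τ` is
bounded and then exhausted using σ-finiteness, says `φ_τ` pushes `w_τ ⬝ μ` forward to `μ`. This
extends the formula to all nonnegative measurable `g` without integrability assumptions, shows
that `φ_τ` is nonsingular, and yields the chain rule `w_{t+τ} = w_τ ⬝ (w_t ∘ φ_τ)`. Together with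
the cocycle identity this gives `f_{t+τ} = c_τ w_τ^{1/α} (f_t ∘ φ_τ)`, and since `r_k` is
`φ`-invariant the same relation holds for `r_k f_t`. As `|c_τ| = 1`, the integrand
`|∑ a_j r_k f_{t_j+τ}|^α` is then `w_τ ⬝ (|∑ a_j r_k f_{t_j}|^α ∘ φ_τ)`, whence stationarity.
The decomposition is pointwise: `|∑ a_j r_k f_{t_j}|^α = r_k^α |∑ a_j f_{t_j}|^α` and
`∑_k r_k^α = 1` almost everywhere.
-/

open scoped ENNReal

namespace IsNonsingularFlow

variable {T S : Type*} [AddCommGroup T] [MeasurableSpace S] {μ : Measure S} {φ : T → S → S}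

theorem apply_add (hφ : IsNonsingularFlow μ φ) (t τ : T) (s : S) :
    φ (t + τ) s = φ t (φ τ s) :=
  congrFun (hφ.2.2.1 t τ) s

theorem apply_apply_neg (hφ : IsNonsingularFlow μ φ) (t : T) (s : S) : φ t (φ (-t) s) = s := by
  rw [← hφ.apply_add, add_neg_cancel, hφ.2.1, id]

theorem apply_neg_apply (hφ : IsNonsingularFlow μ φ) (t : T) (s : S) : φ (-t) (φ t s) = s := by
  simpa using hφ.apply_apply_neg (-t) s

end IsNonsingularFlow

theorem IsCocycle.abs_eq_one {T S : Type*} [AddCommGroup T] [MeasurableSpace S] {μ : Measure S}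
    {φ : T → S → S} {c : T → S → ℝ} (hc : IsCocycle μ φ c) (t : T) (s : S) : |c t s| = 1 := by
  rcases hc.2.1 t s with h | h <;> simp [h]

namespace IsFlowRN

variable {T S : Type*} [AddCommGroup T] [MeasurableSpace S] {μ : Measure S} {φ : T → S → S}
  {w : T → S → ℝ}

theorem setLIntegral_eq_measure_preimage (hφ : IsNonsingularFlow μ φ) (hw : IsFlowRN μ φ w)
    (τ : T) {A : Set S} (hA : MeasurableSet A) (hAμ : μ A ≠ ∞) (hAφ : μ (φ (-τ) ⁻¹' A) ≠ ∞)
    {C : ℝ} (hC : ∀ s ∈ A, w τ s ≤ C) :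
    ∫⁻ s in A, ENNReal.ofReal (w τ s) ∂μ = μ (φ (-τ) ⁻¹' A) := by
  have hB : MeasurableSet (φ (-τ) ⁻¹' A) := hφ.1 (-τ) hA
  have hw_int : IntegrableOn (w τ) A μ := by
    refine Measure.integrableOn_of_bounded hAμ (hw.1 τ).aestronglyMeasurable (M := C)
      ((ae_restrict_iff' hA).2 ?_)
    filter_upwards [hw.2.1 τ] with s hs hsA
    rw [Real.norm_of_nonneg hs.le]
    exact hC s hsA
  have hcomp : (fun s => (φ (-τ) ⁻¹' A).indicator 1 (φ τ s) * w τ s) = A.indicator (w τ) := by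
    ext s
    by_cases hs : s ∈ A <;> simp [Set.indicator, hs, hφ.apply_neg_apply]
  have hchange := hw.2.2 τ ((φ (-τ) ⁻¹' A).indicator 1)
    ((integrable_indicator_iff hB).2 (integrableOn_const hAφ))
  rw [hcomp, integral_indicator hA, integral_indicator_one hB] at hchange
  rw [← ofReal_integral_eq_lintegral_ofReal hw_int (ae_restrict_of_ae (hw.2.1 τ |>.mono
    fun s hs => hs.le)), hchange, ofReal_measureReal hAφ]

variable [SigmaFinite μ]

theorem map_withDensity (hφ : IsNonsingularFlow μ φ) (hw : IsFlowRN μ φ w) (τ : T) :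
    (μ.withDensity fun s => ENNReal.ofReal (w τ s)).map (φ τ) = μ := by
  ext B hB
  set E := spanningSets μ
  -- exhaust `φ τ ⁻¹' B` by sets on which `w τ` is bounded and all measures involved are finite
  set A : ℕ → Set S := fun n => E n ∩ φ τ ⁻¹' (B ∩ E n) ∩ {s | w τ s ≤ n}
  have hA_meas n : MeasurableSet (A n) :=
    ((measurableSet_spanningSets μ n).inter (hφ.1 τ (hB.inter (measurableSet_spanningSets μ n))))
      |>.inter (measurableSet_le (hw.1 τ) measurable_const)
  have hA_mono : Monotone A := fun m n hmn s ⟨⟨hs, hφs⟩, hws⟩ =>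
    ⟨⟨monotone_spanningSets μ hmn hs, hφs.1, monotone_spanningSets μ hmn hφs.2⟩,
      le_trans (α := ℝ) hws (Nat.cast_le.2 hmn)⟩
  have hA_iUnion : ⋃ n, A n = φ τ ⁻¹' B := by
    refine Set.Subset.antisymm (Set.iUnion_subset fun n s hs => hs.1.2.1) fun s hs => ?_
    have hmem x : ∃ n, x ∈ E n := Set.mem_iUnion.1 (by rw [iUnion_spanningSets]; trivial)
    obtain ⟨n₁, h₁⟩ := hmem s
    obtain ⟨n₂, h₂⟩ := hmem (φ τ s)
    refine Set.mem_iUnion.2 ⟨n₁ + n₂ + ⌈w τ s⌉₊, ⟨monotone_spanningSets μ (by omega) h₁,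
      hs, monotone_spanningSets μ (by omega) h₂⟩,
      le_trans (α := ℝ) (Nat.le_ceil (w τ s)) (Nat.cast_le.2 (Nat.le_add_left _ _))⟩
  have hA_preimage n : φ (-τ) ⁻¹' A n ⊆ B ∩ E n := fun s hs => by
    simpa [hφ.apply_apply_neg] using hs.1.2
  have hB_iUnion : ⋃ n, φ (-τ) ⁻¹' A n = B := by
    rw [← Set.preimage_iUnion, hA_iUnion, ← Set.preimage_comp]
    ext s
    simp [hφ.apply_apply_neg]
  have hpre_mono : Monotone fun n => φ (-τ) ⁻¹' A n :=
    fun m n hmn => Set.preimage_mono (hA_mono hmn)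
  rw [Measure.map_apply (hφ.1 τ) hB, ← hA_iUnion, hA_mono.measure_iUnion, ← hB_iUnion,
    hpre_mono.measure_iUnion]
  refine iSup_congr fun n => ?_
  have hE_fin : μ (E n) ≠ ∞ := (measure_spanningSets_lt_top μ n).ne
  rw [withDensity_apply _ (hA_meas n)]
  exact hw.setLIntegral_eq_measure_preimage hφ τ (hA_meas n)
    (measure_ne_top_of_subset (fun s hs => hs.1.1) hE_fin)
    (measure_ne_top_of_subset ((hA_preimage n).trans Set.inter_subset_right) hE_fin)
    fun s hs => hs.2

theorem lintegral_comp_mul (hφ : IsNonsingularFlow μ φ) (hw : IsFlowRN μ φ w) (τ : T)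
    {g : S → ℝ≥0∞} (hg : Measurable g) :
    ∫⁻ s, g (φ τ s) * ENNReal.ofReal (w τ s) ∂μ = ∫⁻ s, g s ∂μ := by
  conv_rhs => rw [← hw.map_withDensity hφ τ]
  have hdens :=
    lintegral_withDensity_eq_lintegral_mul μ (hw.1 τ).ennreal_ofReal (hg.comp (hφ.1 τ))
  simp only [Pi.mul_apply, Function.comp_apply] at hdens
  rw [lintegral_map hg (hφ.1 τ), hdens]
  simp only [mul_comm]

theorem quasiMeasurePreserving (hφ : IsNonsingularFlow μ φ) (hw : IsFlowRN μ φ w) (τ : T) :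
    Measure.QuasiMeasurePreserving (φ τ) μ μ where
  measurable := hφ.1 τ
  absolutelyContinuous := by
    conv_rhs => rw [← hw.map_withDensity hφ τ]
    refine Measure.AbsolutelyContinuous.map (withDensity_absolutelyContinuous'
      (hw.1 τ).ennreal_ofReal.aemeasurable ?_) (hφ.1 τ)
    filter_upwards [hw.2.1 τ] with s hs using (ENNReal.ofReal_pos.2 hs).ne'

theorem integral_comp_mul_of_nonneg (hφ : IsNonsingularFlow μ φ) (hw : IsFlowRN μ φ w) (τ : T)
    {g : S → ℝ} (hg : Measurable g) (hg_nonneg : 0 ≤ g) :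
    ∫ s, g (φ τ s) * w τ s ∂μ = ∫ s, g s ∂μ := by
  have hprod_nonneg : 0 ≤ᵐ[μ] fun s => g (φ τ s) * w τ s := by
    filter_upwards [hw.2.1 τ] with s hs using mul_nonneg (hg_nonneg _) hs.le
  rw [integral_eq_lintegral_of_nonneg_ae hprod_nonneg
      ((hg.comp (hφ.1 τ)).mul (hw.1 τ)).aestronglyMeasurable,
    integral_eq_lintegral_of_nonneg_ae (ae_of_all _ hg_nonneg) hg.aestronglyMeasurable]
  simp only [ENNReal.ofReal_mul (hg_nonneg _)]
  rw [hw.lintegral_comp_mul hφ τ hg.ennreal_ofReal]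

theorem ae_apply_add (hφ : IsNonsingularFlow μ φ) (hw : IsFlowRN μ φ w) (t τ : T) :
    ∀ᵐ s ∂μ, w (t + τ) s = w τ s * w t (φ τ s) := by
  have hW : ∀ᵐ s ∂μ, ENNReal.ofReal (w (t + τ) s) =
      ENNReal.ofReal (w τ s) * ENNReal.ofReal (w t (φ τ s)) := by
    refine ae_eq_of_forall_setLIntegral_eq_of_sigmaFinite (hw.1 _).ennreal_ofReal
      ((hw.1 τ).ennreal_ofReal.mul ((hw.1 t).comp (hφ.1 τ)).ennreal_ofReal) fun A hA _ => ?_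
    -- test both densities against `g = 𝟙_A ∘ φ_{-(t+τ)}`, for which `g ∘ φ_{t+τ} = 𝟙_A`
    set g : S → ℝ≥0∞ := (φ (-(t + τ)) ⁻¹' A).indicator 1
    have hg : Measurable g := measurable_one.indicator (hφ.1 _ hA)
    have hgA (u : S → ℝ≥0∞) : (fun s => g (φ (t + τ) s) * u s) = A.indicator u := by
      ext s
      by_cases hs : s ∈ A <;>
        simp only [g, Set.indicator, Set.mem_preimage, hφ.apply_neg_apply, hs, if_true, if_false,
          Pi.one_apply, one_mul, zero_mul]
    calc ∫⁻ s in A, ENNReal.ofReal (w (t + τ) s) ∂μ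
        = ∫⁻ s, g (φ (t + τ) s) * ENNReal.ofReal (w (t + τ) s) ∂μ := by
          rw [hgA, lintegral_indicator hA]
      _ = ∫⁻ s, g (φ t s) * ENNReal.ofReal (w t s) ∂μ := by
          rw [hw.lintegral_comp_mul hφ _ hg, hw.lintegral_comp_mul hφ _ hg]
      _ = ∫⁻ s, g (φ (t + τ) s) * (ENNReal.ofReal (w τ s) * ENNReal.ofReal (w t (φ τ s))) ∂μ := by
          rw [← hw.lintegral_comp_mul hφ τ (g := fun x => g (φ t x) * ENNReal.ofReal (w t x))
            ((hg.comp (hφ.1 t)).mul (hw.1 t).ennreal_ofReal)]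
          simp only [hφ.apply_add, mul_comm, mul_left_comm, mul_assoc]
      _ = ∫⁻ s in A, ENNReal.ofReal (w τ s) * ENNReal.ofReal (w t (φ τ s)) ∂μ := by
          rw [hgA (fun s => _ * _), lintegral_indicator hA]
  filter_upwards [hW, hw.2.1 (t + τ), hw.2.1 τ, (hw.quasiMeasurePreserving hφ τ).ae (hw.2.1 t)]
    with s hs h_add hτ ht
  rwa [← ENNReal.ofReal_mul hτ.le, ENNReal.ofReal_eq_ofReal_iff h_add.le (mul_pos hτ ht).le] at hs

end IsFlowRN

theorem FlowGenerated.ae_apply_add {T S : Type*} [AddCommGroup T] [MeasurableSpace S]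
    {μ : Measure S} [SigmaFinite μ] {α : ℝ} {φ : T → S → S} {c w f : T → S → ℝ}
    (hφ : IsNonsingularFlow μ φ) (hc : IsCocycle μ φ c) (hw : IsFlowRN μ φ w)
    (hgen : FlowGenerated α μ φ c w f) (t τ : T) :
    ∀ᵐ s ∂μ, f (t + τ) s = c τ s * w τ s ^ (1 / α) * f t (φ τ s) := by
  have hqmp := hw.quasiMeasurePreserving hφ τ
  filter_upwards [hgen (t + τ), hqmp.ae (hgen t), hc.2.2 τ t, hw.ae_apply_add hφ t τ,
    hw.2.1 τ, hqmp.ae (hw.2.1 t)] with s hf_add hf hc_add hw_add hwτ hwt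
  rw [add_comm τ t] at hc_add
  rw [hf_add, hf, hc_add, hw_add, Real.mul_rpow hwτ.le hwt.le, hφ.apply_add]
  ring

theorem stationaryFam_of_ae_apply_add {T S : Type*} [AddCommGroup T] [MeasurableSpace S]
    {μ : Measure S} [SigmaFinite μ] {α : ℝ} (hα : α ≠ 0) {φ : T → S → S} {c w g : T → S → ℝ}
    (hφ : IsNonsingularFlow μ φ) (hw : IsFlowRN μ φ w) (hc : ∀ τ s, |c τ s| = 1)
    (hg : ∀ t, Measurable (g t))
    (hrel : ∀ t τ, ∀ᵐ s ∂μ, g (t + τ) s = c τ s * w τ s ^ (1 / α) * g t (φ τ s)) :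
    StationaryFam α μ g := by
  intro τ m a t
  set F : S → ℝ := fun s => |∑ j, a j * g (t j) s| ^ α
  have hF : Measurable F :=
    (Finset.measurable_sum _ fun j _ => (hg (t j)).const_mul (a j)).abs.pow_const α
  have hshift : (fun s => |∑ j, a j * g (t j + τ) s| ^ α) =ᵐ[μ] fun s => F (φ τ s) * w τ s := by
    filter_upwards [ae_all_iff.2 fun j => hrel (t j) τ, hw.2.1 τ] with s hs hwτ
    have hsum : ∑ j, a j * g (t j + τ) s =
        c τ s * w τ s ^ (1 / α) * ∑ j, a j * g (t j) (φ τ s) := by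
      simp only [hs, Finset.mul_sum]
      exact Finset.sum_congr rfl fun j _ => by ring
    rw [hsum, abs_mul, abs_mul, hc, one_mul, abs_of_nonneg (by positivity),
      Real.mul_rpow (by positivity) (abs_nonneg _), ← Real.rpow_mul hwτ.le,
      one_div_mul_cancel hα, Real.rpow_one, mul_comm]
  exact (integral_congr_ae hshift).trans
    (hw.integral_comp_mul_of_nonneg hφ τ hF fun s => by positivity)

theorem integrable_abs_sum_rpow {ι S : Type*} [MeasurableSpace S] {μ : Measure S} {α : ℝ}
    (hα : 0 < α) {f : ι → S → ℝ} (hf_meas : ∀ i, AEStronglyMeasurable (f i) μ)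
    (hf_int : ∀ i, Integrable (fun s => |f i s| ^ α) μ) {m : ℕ} (a : Fin m → ℝ)
    (t : Fin m → ι) :
    Integrable (fun s => |∑ j, a j * f (t j) s| ^ α) μ := by
  have hp : ENNReal.ofReal α ≠ 0 := by simpa using hα
  have hLp i : MemLp (f i) (ENNReal.ofReal α) μ := by
    refine (integrable_norm_rpow_iff (hf_meas i) hp ENNReal.ofReal_ne_top).1 ?_
    simpa [Real.norm_eq_abs, ENNReal.toReal_ofReal hα.le] using hf_int i
  have hsum := memLp_finsetSum Finset.univ fun j _ => (hLp (t j)).const_mul (a j)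
  simpa [Real.norm_eq_abs, ENNReal.toReal_ofReal hα.le] using
    (integrable_norm_rpow_iff hsum.1 hp ENNReal.ofReal_ne_top).2 hsum

theorem sasDecomp_mul_of_sum_rpow_eq_one {T S : Type*} [MeasurableSpace S] {μ : Measure S}
    {α : ℝ} (hα : 0 < α) {f : T → S → ℝ} (hf_meas : ∀ t, AEStronglyMeasurable (f t) μ)
    (hf_int : ∀ t, Integrable (fun s => |f t s| ^ α) μ) {n : ℕ} {r : Fin n → S → ℝ}
    (hr_meas : ∀ k, AEMeasurable (r k) μ) (hr_nonneg : ∀ k s, 0 ≤ r k s)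
    (hr_sum : ∀ᵐ s ∂μ, ∑ k, r k s ^ α = 1) :
    SasDecomp α μ f (fun _ : Fin n => μ) (fun k t s => r k s * f t s) := by
  intro m a t
  set F : S → ℝ := fun s => |∑ j, a j * f (t j) s| ^ α
  have hF : Integrable F μ := integrable_abs_sum_rpow hα hf_meas hf_int a t
  have hsplit k s : |∑ j, a j * (r k s * f (t j) s)| ^ α = r k s ^ α * F s := by
    simp only [F, mul_left_comm (a _), ← Finset.mul_sum, abs_mul, abs_of_nonneg (hr_nonneg k s),
      Real.mul_rpow (hr_nonneg k s) (abs_nonneg _)]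
  have hr_le_one k : ∀ᵐ s ∂μ, r k s ^ α ≤ 1 := by
    filter_upwards [hr_sum] with s hs
    exact hs ▸ Finset.single_le_sum (fun k _ => Real.rpow_nonneg (hr_nonneg k s) α)
      (Finset.mem_univ k)
  have hint k : Integrable (fun s => r k s ^ α * F s) μ := by
    refine hF.mono' (((hr_meas k).pow_const α).aestronglyMeasurable.mul hF.1) ?_
    filter_upwards [hr_le_one k] with s hs
    rw [Real.norm_of_nonneg (mul_nonneg (Real.rpow_nonneg (hr_nonneg k s) α) (by positivity))]
    exact mul_le_of_le_one_left (by positivity) hs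
  simp only [hsplit]
  rw [← integral_finsetSum _ fun k _ => hint k]
  refine integral_congr_ae ?_
  filter_upwards [hr_sum] with s hs
  rw [← Finset.sum_mul, hs, one_mul]

theorem invariant_weights_give_stationary_decomposition_general
    {T S : Type*} [AddCommGroup T] [MeasurableSpace S]
    (μ : Measure S) [SigmaFinite μ]
    (α : ℝ) (hα0 : 0 < α)
    (φ : T → S → S) (c : T → S → ℝ) (w : T → S → ℝ)
    (hφ : IsNonsingularFlow μ φ) (hc : IsCocycle μ φ c) (hw : IsFlowRN μ φ w)
    (f : T → S → ℝ) (hf_meas : ∀ t, Measurable (f t))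
    (hf_int : ∀ t, Integrable (fun s => |f t s| ^ α) μ)
    (hgen : FlowGenerated α μ φ c w f)
    (n : ℕ) (r : Fin n → S → ℝ) (hr_meas : ∀ k, Measurable (r k))
    (hr_range : ∀ k s, r k s ∈ Set.Icc (0 : ℝ) 1)
    (hr_inv : ∀ (k : Fin n) (τ : T), (fun s => r k (φ τ s)) =ᵐ[μ] r k)
    (hr_sum : ∀ᵐ s ∂μ, ∑ k, r k s ^ α = 1) :
    (∀ k, StationaryFam α μ (fun t s => r k s * f t s)) ∧
    SasDecomp α μ f (fun _ : Fin n => μ) (fun k t s => r k s * f t s) := by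
  refine ⟨fun k => stationaryFam_of_ae_apply_add hα0.ne' hφ hw hc.abs_eq_one
    (fun t => (hr_meas k).mul (hf_meas t)) fun t τ => ?_,
    sasDecomp_mul_of_sum_rpow_eq_one hα0 (fun t => (hf_meas t).aestronglyMeasurable) hf_int
      (fun k => (hr_meas k).aemeasurable) (fun k s => (hr_range k s).1) hr_sum⟩
  filter_upwards [hgen.ae_apply_add hφ hc hw t τ, hr_inv k τ] with s hf hr
  rw [hf, ← hr]
  ring

/-- Theorem 3.2 (ii): flow-invariant weights with `∑ r_k^α = 1` a.e. produce a
stationary SαS decomposition of a flow-generated stationary SαS process. -/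
theorem invariant_weights_give_stationary_decomposition
    {T S : Type*} [AddCommGroup T] [MeasurableSpace S] [StandardBorelSpace S]
    (μ : Measure S) [SigmaFinite μ]
    (α : ℝ) (hα0 : 0 < α) (hα2 : α < 2) (hT : IsRdOrZd T)
    (φ : T → S → S) (c : T → S → ℝ) (w : T → S → ℝ)
    (hφ : IsNonsingularFlow μ φ) (hc : IsCocycle μ φ c) (hw : IsFlowRN μ φ w)
    (f : T → S → ℝ) (hf_meas : ∀ t, Measurable (f t))
    (hf_int : ∀ t, Integrable (fun s => |f t s| ^ α) μ)
    (hgen : FlowGenerated α μ φ c w f)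
    (n : ℕ) (r : Fin n → S → ℝ) (hr_meas : ∀ k, Measurable (r k))
    (hr_range : ∀ k s, r k s ∈ Set.Icc (0 : ℝ) 1)
    (hr_inv : ∀ (k : Fin n) (τ : T), (fun s => r k (φ τ s)) =ᵐ[μ] r k)
    (hr_sum : ∀ᵐ s ∂μ, ∑ k, r k s ^ α = 1) :
    (∀ k, StationaryFam α μ (fun t s => r k s * f t s)) ∧
    SasDecomp α μ f (fun _ : Fin n => μ) (fun k t s => r k s * f t s) :=
  invariant_weights_give_stationary_decomposition_general μ α hα0 φ c w hφ hc hw f hf_meas hf_int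
    hgen n r hr_meas hr_range hr_inv hr_sum
end
end

section
/- Let μ be a σ-finite measure on a measurable space (S, B_S), let (S̃, B̃) be a measurable space, Φ : S → S̃ a measurable map, and h : S → ℝ a measurable function with h(s) ≠ 0 for μ-a.e. s. Let {f_t}_{t∈T} and {f̃_t}_{t∈T} be families of measurable real-valued functions on S and S̃ respectively such that for each t ∈ T, f_t = h · (f̃_t ∘ Φ) μ-a.e. Then the ratio σ-algebras ρ(F) = σ(f_{t₁}/f_{t₂} : t₁, t₂ ∈ T) on S and Φ^{−1}(ρ(F̃)), where ρ(F̃) = σ(f̃_{t₁}/f̃_{t₂} : t₁, t₂ ∈ T), are equivalent modulo μ: for every A ∈ ρ(F) there exists B ∈ Φ^{−1}(ρ(F̃)) with μ(A Δ B) = 0, and conversely for every B ∈ Φ^{−1}(ρ(F̃)) there exists A ∈ ρ(F) with μ(A Δ B) = 0. -/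
open MeasureTheory

noncomputable section

/-- The σ-algebra of sets equal mod `μ` to a set measurable w.r.t. `m`. -/
def aeEqSigma {S : Type*} [MeasurableSpace S] (μ : Measure S) (m : MeasurableSpace S) : MeasurableSpace S where
  MeasurableSet' A := ∃ B : Set S, MeasurableSet[m] B ∧ μ (symmDiff A B) = 0
  measurableSet_empty := ⟨∅, m.measurableSet_empty, by simp [symmDiff_self]⟩
  measurableSet_compl := by
    rintro A ⟨B, hB, h0⟩
    exact ⟨Bᶜ, hB.compl, by rwa [compl_symmDiff_compl]⟩
  measurableSet_iUnion := by
    intro g hg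
    choose B hB h0 using hg
    refine ⟨⋃ i, B i, MeasurableSet.iUnion hB, measure_mono_null ?_ (measure_iUnion_null h0)⟩
    intro x hx
    simp only [Set.mem_symmDiff, Set.mem_iUnion, not_exists] at hx ⊢
    rcases hx with ⟨⟨i, hi⟩, hnb⟩ | ⟨⟨i, hi⟩, hna⟩
    · exact ⟨i, Or.inl ⟨hi, hnb i⟩⟩
    · exact ⟨i, Or.inr ⟨hi, hna i⟩⟩

lemma comap_le_aeEqSigma {S : Type*} [m0 : MeasurableSpace S] {μ : Measure S}
    {g g' : S → ℝ} (hgg' : ∀ᵐ s ∂μ, g s = g' s) (m : MeasurableSpace S)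
    (hm : MeasurableSpace.comap g' inferInstance ≤ m) :
    MeasurableSpace.comap g inferInstance ≤ @aeEqSigma S m0 μ m := by
  rintro A ⟨E, hE, rfl⟩
  show ∃ B : Set S, MeasurableSet[m] B ∧ μ (symmDiff (g ⁻¹' E) B) = 0
  refine ⟨g' ⁻¹' E, hm _ ⟨E, hE, rfl⟩, measure_mono_null (fun x hx => ?_) (ae_iff.1 hgg')⟩
  simp only [Set.mem_symmDiff, Set.mem_preimage] at hx
  simp only [Set.mem_setOf_eq]
  intro heq
  rw [heq] at hx
  rcases hx with ⟨h1, h2⟩ | ⟨h1, h2⟩ <;> exact h2 h1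

/-- if `f_t = h ⬝ (f̃_t ∘ Φ)` μ-a.e. with `h ≠ 0` a.e., then the ratio
σ-algebra `ρ(F)` and the pullback `Φ⁻¹(ρ(F̃))` are equivalent modulo `μ`. -/
theorem ratio_sigma_algebra_equiv_pullback
    {T S St : Type*} [MeasurableSpace S] [MeasurableSpace St]
    (μ : Measure S) [SigmaFinite μ]
    (Φ : S → St) (hΦ : Measurable Φ)
    (h : S → ℝ) (hh_meas : Measurable h) (hh_ne : ∀ᵐ s ∂μ, h s ≠ 0)
    (f : T → S → ℝ) (ftil : T → St → ℝ)
    (hf_meas : ∀ t, Measurable (f t)) (hftil_meas : ∀ t, Measurable (ftil t))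
    (hrel : ∀ t, ∀ᵐ s ∂μ, f t s = h s * ftil t (Φ s)) :
    (∀ A : Set S, MeasurableSet[ratioSigma f] A →
      ∃ B : Set S, MeasurableSet[(ratioSigma ftil).comap Φ] B ∧ μ (symmDiff A B) = 0) ∧
    (∀ B : Set S, MeasurableSet[(ratioSigma ftil).comap Φ] B →
      ∃ A : Set S, MeasurableSet[ratioSigma f] A ∧ μ (symmDiff A B) = 0) := by
  have hratio : ∀ t₁ t₂ : T, ∀ᵐ s ∂μ,
      f t₁ s / f t₂ s = ftil t₁ (Φ s) / ftil t₂ (Φ s) := by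
    intro t₁ t₂
    filter_upwards [hrel t₁, hrel t₂, hh_ne] with s h1 h2 h3
    rw [h1, h2, mul_div_mul_left _ _ h3]
  have hcomap : (ratioSigma ftil).comap Φ =
      ⨆ (t₁ : T) (t₂ : T),
        MeasurableSpace.comap (fun s => ftil t₁ (Φ s) / ftil t₂ (Φ s)) inferInstance := by
    simp only [ratioSigma, MeasurableSpace.comap_iSup, MeasurableSpace.comap_comp,
      Function.comp_def]
  constructor
  · intro A hA
    have : ratioSigma f ≤ aeEqSigma μ ((ratioSigma ftil).comap Φ) := by
      refine iSup_le fun t₁ => iSup_le fun t₂ => ?_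
      refine comap_le_aeEqSigma (hratio t₁ t₂) _ ?_
      rw [hcomap]
      exact le_iSup₂ (f := fun t₁ t₂ =>
        MeasurableSpace.comap (fun s => ftil t₁ (Φ s) / ftil t₂ (Φ s)) inferInstance) t₁ t₂
    exact this A hA
  · intro B hB
    have : (ratioSigma ftil).comap Φ ≤ aeEqSigma μ (ratioSigma f) := by
      rw [hcomap]
      refine iSup_le fun t₁ => iSup_le fun t₂ => ?_
      refine comap_le_aeEqSigma (Filter.Eventually.mono (hratio t₁ t₂) fun s hs => hs.symm) _ ?_
      exact le_iSup₂ (f := fun t₁ t₂ =>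
        MeasurableSpace.comap (fun s => f t₁ s / f t₂ s) inferInstance) t₁ t₂
    obtain ⟨A, hA, h0⟩ := this B hB
    exact ⟨A, hA, by rwa [symmDiff_comm]⟩
end
end
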